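/- arXiv:1103.0598 — 5 statements merged into one kernel-verified Lean document; each statement's English description precedes it below -/
import Mathlib

section
/- Any finite sum of independent (not necessarily identically distributed) Bernoulli random variables has a unimodal distribution on {0,1,...,n}: there exists a mode M such that the probability mass function is nonincreasing on {0,...,M} when read from M downward and nonincreasing on {M,...,n} when read from M upward (equivalently, nondecreasing up to M and nonincreasing after M). -/
/-!
If `X` has pmf `f` and `B ∼ Bernoulli t` is independent of `X`, then `X + B` has pmf
`k ↦ (1 - t) f k + t f (k - 1)`, whose increments are convex combinations of two consecutive
increments of `f` (extended by `f (-1) = 0`). So if `f` increases up to `M` and decreases from `M`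
on, the pmf of `X + B` increases up to `M` and decreases from `M + 1` on, and one of `M`, `M + 1`
is a mode. Adding the Bernoulli summands one at a time gives the theorem.
-/

open Finset

/-- The pmf (at value `k`) of a sum of `n` independent Bernoulli random variables with
parameters `p`. -/
noncomputable def bernSumPMF {n : ℕ} (p : Fin n → ℝ) (k : ℕ) : ℝ :=
  ∑ x ∈ univ.filter
      (fun x : Fin n → Bool => (univ.filter (fun i => x i = true)).card = k),
    ∏ i, if x i then p i else 1 - p i

def IsUnimodal {α : Type*} [Preorder α] (f : ℕ → α) : Prop :=
  ∃ M, (∀ j < M, f j ≤ f (j + 1)) ∧ ∀ j, M ≤ j → f (j + 1) ≤ f j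

theorem IsUnimodal.exists_mode_le {α : Type*} [Preorder α] {f : ℕ → α} (hf : IsUnimodal f)
    (n : ℕ) :
    ∃ M ≤ n, (∀ j, j < M → f j ≤ f (j + 1)) ∧ (∀ j, M ≤ j → j < n → f (j + 1) ≤ f j) := by
  obtain ⟨M, hup, hdown⟩ := hf
  exact ⟨min M n, min_le_right M n, fun j hj => hup j (by omega),
    fun j hj hjn => hdown j (by omega)⟩

/-- The pmf of `X + B` when `f` is the pmf of `X` and `B ∼ Bernoulli t` is independent of `X`. -/
def convBernoulli (t : ℝ) (f : ℕ → ℝ) : ℕ → ℝ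
  | 0 => (1 - t) * f 0
  | k + 1 => (1 - t) * f (k + 1) + t * f k

theorem convBernoulli_add_two_sub (t : ℝ) (f : ℕ → ℝ) (j : ℕ) :
    convBernoulli t f (j + 2) - convBernoulli t f (j + 1) =
      (1 - t) * (f (j + 2) - f (j + 1)) + t * (f (j + 1) - f j) := by
  simp only [convBernoulli]
  ring

theorem isUnimodal_convBernoulli {f : ℕ → ℝ} {t : ℝ} (hf : IsUnimodal f) (ht₀ : 0 ≤ t)
    (ht₁ : t ≤ 1) (hf₀ : 0 ≤ f 0) : IsUnimodal (convBernoulli t f) := by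
  obtain ⟨M, hup, hdown⟩ := hf
  have up : ∀ j < M, convBernoulli t f j ≤ convBernoulli t f (j + 1) := by
    rintro (_ | j) hj
    · simp only [convBernoulli, zero_add]
      nlinarith [hup 0 hj]
    · nlinarith [convBernoulli_add_two_sub t f j, hup (j + 1) hj, hup j (by omega)]
  have down : ∀ j, M + 1 ≤ j → convBernoulli t f (j + 1) ≤ convBernoulli t f j := by
    rintro (_ | j) hj
    · omega
    · nlinarith [convBernoulli_add_two_sub t f j, hdown (j + 1) (by omega), hdown j (by omega)]
  by_cases hM : convBernoulli t f (M + 1) ≤ convBernoulli t f M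
  · refine ⟨M, up, fun j hj => ?_⟩
    rcases hj.eq_or_lt with rfl | hlt
    exacts [hM, down j hlt]
  · refine ⟨M + 1, fun j hj => ?_, down⟩
    rcases Nat.lt_succ_iff_lt_or_eq.mp hj with hlt | rfl
    exacts [up j hlt, (not_le.mp hM).le]

theorem bernSumPMF_nonneg {n : ℕ} {p : Fin n → ℝ} (hp : ∀ i, 0 ≤ p i ∧ p i ≤ 1) (k : ℕ) :
    0 ≤ bernSumPMF p k :=
  sum_nonneg fun x _ => prod_nonneg fun i _ => by split_ifs <;> linarith [hp i]

theorem bernSumPMF_eq_zero_of_lt {n : ℕ} (p : Fin n → ℝ) {k : ℕ} (hk : n < k) :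
    bernSumPMF p k = 0 := by
  refine sum_eq_zero fun x hx => absurd (mem_filter.mp hx).2 ?_
  have := card_filter_le univ fun i => x i = true
  rw [card_univ, Fintype.card_fin] at this
  omega

theorem card_filter_snoc_eq_true {n : ℕ} (y : Fin n → Bool) (b : Bool) :
    #{i | (Fin.snoc y b : Fin (n + 1) → Bool) i = true} = #{i | y i = true} + b.toNat := by
  simp only [card_filter, Fin.sum_univ_castSucc, Fin.snoc_castSucc, Fin.snoc_last]
  cases b <;> rfl

theorem prod_snoc_bernoulli_weight {n : ℕ} (p : Fin n → ℝ) (t : ℝ) (y : Fin n → Bool)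
    (b : Bool) :
    (∏ i, if (Fin.snoc y b : Fin (n + 1) → Bool) i then (Fin.snoc p t : Fin (n + 1) → ℝ) i
      else 1 - (Fin.snoc p t : Fin (n + 1) → ℝ) i) =
      (∏ i, if y i then p i else 1 - p i) * bif b then t else 1 - t := by
  cases b <;> simp [Fin.prod_univ_castSucc]

theorem bernSumPMF_snoc {n : ℕ} (p : Fin n → ℝ) (t : ℝ) :
    bernSumPMF (Fin.snoc p t : Fin (n + 1) → ℝ) = convBernoulli t (bernSumPMF p) := by
  funext k
  simp only [bernSumPMF, sum_filter]
  rw [← (Fin.snocEquiv fun _ => Bool).sum_comp, Fintype.sum_prod_type]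
  simp only [Fin.snocEquiv_apply, prod_snoc_bernoulli_weight, card_filter_snoc_eq_true]
  rw [Fintype.sum_bool]
  cases k <;> simp only [convBernoulli, bernSumPMF, sum_filter, mul_sum, ← sum_add_distrib,
    Bool.toNat_true, Bool.toNat_false, add_zero, cond_true, cond_false] <;>
    refine sum_congr rfl fun y _ => ?_ <;>
    split_ifs <;> first | ring1 | omega | contradiction

theorem isUnimodal_bernSumPMF {n : ℕ} (p : Fin n → ℝ) (hp : ∀ i, 0 ≤ p i ∧ p i ≤ 1) :
    IsUnimodal (bernSumPMF p) := by
  induction n with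
  | zero =>
    refine ⟨0, fun j hj => absurd hj j.not_lt_zero, fun j _ => ?_⟩
    rw [bernSumPMF_eq_zero_of_lt p j.succ_pos]
    exact bernSumPMF_nonneg hp j
  | succ n ih =>
    have hinit : ∀ i, 0 ≤ Fin.init p i ∧ Fin.init p i ≤ 1 := fun i => hp i.castSucc
    rw [← Fin.snoc_init_self p, bernSumPMF_snoc]
    exact isUnimodal_convBernoulli (ih _ hinit) (hp _).1 (hp _).2 (bernSumPMF_nonneg hinit 0)

/-- Any sum of independent Bernoulli random variables has a unimodal distribution on
`{0,1,...,n}`: there is a mode `M` such that the pmf is nondecreasing up to `M`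
and nonincreasing after `M`. -/
theorem stmt4 {n : ℕ} (p : Fin n → ℝ) (hp : ∀ i, 0 ≤ p i ∧ p i ≤ 1) :
    ∃ M ≤ n, (∀ j, j < M → bernSumPMF p j ≤ bernSumPMF p (j + 1)) ∧
      (∀ j, M ≤ j → j < n → bernSumPMF p (j + 1) ≤ bernSumPMF p j) :=
  (isUnimodal_bernSumPMF p hp).exists_mode_le n
end

section
/- Let Y = m + Poisson(λ) and Ŷ = m̂ + Poisson(λ̂) be shifted Poisson random variables with λ, λ̂ > 0 and m, m̂ ∈ ℕ. Then the total variation distance between Y and Ŷ is at most twice their Kolmogorov distance. -/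
/-!
Let `p`, `q` be the pmfs of `Y` and `Ŷ`, with `m ≤ m̂`. For `i ≥ m̂` the likelihood ratio
`r i = p i / q i` satisfies `r (i + 1) = r i * λ (i + 1 - m̂) / (λ̂ (i + 1 - m))`, and this factor
increases with `i`. Hence once `r` climbs from below `1` to at least `1` it never drops below `1`
again: `p - q` changes sign at most twice, with pattern `+, -, +` or `-, +`. For a sequence `d`
with this pattern and total sum `0`, half of `∑ |d i|` equals `∑_{i<a} d i + ∑_{i≥b} d i`; the
first term is a partial sum and the second the negative of one, so each is at most the
Kolmogorov distance.
-/

/-- The pmf of `m + Poisson(lam)`, a Poisson random variable with mean `lam` shifted by the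
nonnegative integer `m`. -/
noncomputable def shiftedPoissonPMF (lam : ℝ) (m : ℕ) (i : ℕ) : ℝ :=
  if m ≤ i then Real.exp (-lam) * lam ^ (i - m) / (i - m).factorial else 0

open Finset

lemma shiftedPoissonPMF_nonneg {lam : ℝ} (hlam : 0 ≤ lam) (m i : ℕ) :
    0 ≤ shiftedPoissonPMF lam m i := by
  unfold shiftedPoissonPMF
  split <;> positivity

lemma shiftedPoissonPMF_pos {lam : ℝ} (hlam : 0 < lam) {m i : ℕ} (h : m ≤ i) :
    0 < shiftedPoissonPMF lam m i := by
  rw [shiftedPoissonPMF, if_pos h]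
  positivity

lemma shiftedPoissonPMF_of_lt {lam : ℝ} {m i : ℕ} (h : i < m) : shiftedPoissonPMF lam m i = 0 :=
  if_neg (Nat.not_le.2 h)

lemma hasSum_shiftedPoissonPMF (lam : ℝ) (m : ℕ) : HasSum (shiftedPoissonPMF lam m) 1 := by
  have hexp := (NormedSpace.expSeries_div_hasSum_exp lam).mul_left (Real.exp (-lam))
  rw [← Real.exp_eq_exp_ℝ, ← Real.exp_add, neg_add_cancel, Real.exp_zero] at hexp
  simp_rw [← mul_div_assoc] at hexp
  have hhead : ∑ i ∈ range m, shiftedPoissonPMF lam m i = 0 :=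
    sum_eq_zero fun i hi => shiftedPoissonPMF_of_lt (mem_range.1 hi)
  rw [← hasSum_nat_add_iff' m, hhead, sub_zero]
  refine hexp.congr_fun fun n => ?_
  rw [shiftedPoissonPMF, if_pos (Nat.le_add_left m n), Nat.add_sub_cancel]

lemma shiftedPoissonPMF_succ (lam : ℝ) {m i : ℕ} (h : m ≤ i) :
    shiftedPoissonPMF lam m (i + 1) = lam * shiftedPoissonPMF lam m i / ((i : ℝ) + 1 - m) := by
  rw [shiftedPoissonPMF, shiftedPoissonPMF, if_pos (h.trans i.le_succ), if_pos h,
    Nat.sub_add_comm h, pow_succ, Nat.factorial_succ]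
  have hcast : ((i - m + 1 : ℕ) : ℝ) = (i : ℝ) + 1 - m := by
    push_cast [Nat.cast_sub h]; ring
  rw [Nat.cast_mul, hcast]
  have hpos : (0 : ℝ) < (i : ℝ) + 1 - m := by
    rw [← hcast]; positivity
  field_simp

def NonnegNonposNonneg (d : ℕ → ℝ) (a b : ℕ) : Prop :=
  (∀ i < a, 0 ≤ d i) ∧ (∀ i, a ≤ i → i < b → d i ≤ 0) ∧ ∀ i, b ≤ i → 0 ≤ d i

def CrossesAtMostTwice (d : ℕ → ℝ) : Prop :=
  ∃ a b, a ≤ b ∧ (NonnegNonposNonneg d a b ∨ NonnegNonposNonneg (-d) a b)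

lemma CrossesAtMostTwice.neg {d : ℕ → ℝ} (h : CrossesAtMostTwice d) :
    CrossesAtMostTwice (-d) := by
  obtain ⟨a, b, hab, hd⟩ := h
  exact ⟨a, b, hab, by rw [neg_neg]; exact hd.symm⟩

lemma crossesAtMostTwice_of_nonneg_after_upcrossing {d : ℕ → ℝ}
    (h : ∀ i, d i < 0 → 0 ≤ d (i + 1) → ∀ k, i < k → 0 ≤ d k) : CrossesAtMostTwice d := by
  classical
  by_cases hneg : ∃ i, d i < 0
  swap
  · push Not at hneg
    exact ⟨0, 0, le_rfl, Or.inl ⟨fun i hi => hneg i, fun i _ hi => absurd hi i.not_lt_zero,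
      fun i _ => hneg i⟩⟩
  set a := Nat.find hneg
  have ha : d a < 0 := Nat.find_spec hneg
  have hbefore : ∀ i < a, 0 ≤ d i := fun i hi => not_lt.1 (Nat.find_min hneg hi)
  by_cases hup : ∃ j, a < j ∧ 0 ≤ d j
  · set b := Nat.find hup
    obtain ⟨hab, hb⟩ : a < b ∧ 0 ≤ d b := Nat.find_spec hup
    have hbetween : ∀ i, a ≤ i → i < b → d i < 0 := by
      intro i hai hib
      rcases hai.eq_or_lt with rfl | hai
      · exact ha
      · exact not_le.1 fun hi => Nat.find_min hup hib ⟨hai, hi⟩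
    refine ⟨a, b, hab.le, Or.inl ⟨hbefore, fun i hai hib => (hbetween i hai hib).le, ?_⟩⟩
    obtain ⟨c, hc⟩ : ∃ c, b = c + 1 := ⟨b - 1, by omega⟩
    intro k hk
    exact h c (hbetween c (by omega) (by omega)) (hc ▸ hb) k (by omega)
  · push Not at hup
    refine ⟨0, a, a.zero_le, Or.inr ⟨fun i hi => absurd hi i.not_lt_zero,
      fun i _ hi => by simpa using hbefore i hi, fun i hi => ?_⟩⟩
    rcases hi.eq_or_lt with rfl | hi
    · simpa using ha.le
    · simpa using (hup i hi).le

lemma abs_sum_range_le_iSup {d : ℕ → ℝ} (habs : Summable fun i => |d i|) (x : ℕ) :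
    |∑ i ∈ range x, d i| ≤ ⨆ y : ℕ, |∑ i ∈ range (y + 1), d i| := by
  have hbdd : BddAbove (Set.range fun y : ℕ => |∑ i ∈ range (y + 1), d i|) := by
    refine ⟨∑' i, |d i|, ?_⟩
    rintro _ ⟨y, rfl⟩
    exact (abs_sum_le_sum_abs _ _).trans (habs.sum_le_tsum _ fun i _ => abs_nonneg _)
  rcases x with _ | y
  · simpa using (abs_nonneg _).trans (le_ciSup hbdd 0)
  · exact le_ciSup hbdd y

lemma NonnegNonposNonneg.half_tsum_abs_le {d : ℕ → ℝ} {a b : ℕ}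
    (hd : NonnegNonposNonneg d a b) (hab : a ≤ b) (habs : Summable fun i => |d i|)
    (hsum : ∑' i, d i = 0) :
    (1 / 2) * ∑' i, |d i| ≤ 2 * ⨆ x : ℕ, |∑ i ∈ range (x + 1), d i| := by
  obtain ⟨hbefore, hbetween, hafter⟩ := hd
  have hhead : ∑ i ∈ range b, |d i| = ∑ i ∈ range a, d i - ∑ i ∈ Ico a b, d i := by
    rw [← sum_range_add_sum_Ico _ hab, sub_eq_add_neg, ← sum_neg_distrib]
    congr 1
    · exact sum_congr rfl fun i hi => abs_of_nonneg (hbefore i (mem_range.1 hi))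
    · exact sum_congr rfl fun i hi =>
        abs_of_nonpos (hbetween i (mem_Ico.1 hi).1 (mem_Ico.1 hi).2)
  have htail : ∑' i, |d (i + b)| = ∑' i, d (i + b) :=
    tsum_congr fun i => abs_of_nonneg (hafter _ (Nat.le_add_left b i))
  have hsplit := habs.of_abs.sum_add_tsum_nat_add b
  have hsplit_abs := habs.sum_add_tsum_nat_add b
  have hrange := sum_range_add_sum_Ico d hab
  have hA := abs_sum_range_le_iSup habs a
  have hB := abs_sum_range_le_iSup habs b
  linarith [le_abs_self (∑ i ∈ range a, d i), neg_abs_le (∑ i ∈ range b, d i)]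

lemma CrossesAtMostTwice.half_tsum_abs_le {d : ℕ → ℝ} (hd : CrossesAtMostTwice d)
    (habs : Summable fun i => |d i|) (hsum : ∑' i, d i = 0) :
    (1 / 2) * ∑' i, |d i| ≤ 2 * ⨆ x : ℕ, |∑ i ∈ range (x + 1), d i| := by
  obtain ⟨a, b, hab, hd | hd⟩ := hd
  · exact hd.half_tsum_abs_le hab habs hsum
  · simpa [sum_neg_distrib] using
      hd.half_tsum_abs_le hab (by simpa using habs) (by rw [Pi.neg_def, tsum_neg, hsum, neg_zero])

lemma one_le_of_upcrossing_of_monotoneOn_ratio {r ρ : ℕ → ℝ} {n i : ℕ}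
    (hstep : ∀ j, n ≤ j → r (j + 1) = r j * ρ j) (hρ : MonotoneOn ρ (Set.Ici n)) (hi : n ≤ i)
    (hr : 0 ≤ r i) (hlt : r i < 1) (hle : 1 ≤ r (i + 1)) : ∀ k, i < k → 1 ≤ r k := by
  have hρi : 1 ≤ ρ i := by
    by_contra! h
    nlinarith [hstep i hi]
  intro k hk
  induction k, hk using Nat.le_induction with
  | base => exact hle
  | succ k hk ih =>
    have : ρ i ≤ ρ k := hρ (Set.mem_Ici.2 hi) (Set.mem_Ici.2 (by omega)) (by omega)
    rw [hstep k (by omega)]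
    nlinarith

lemma shiftedPoissonPMF_div_succ {lam lamh : ℝ} (hlamh : 0 < lamh) {m mh j : ℕ} (hm : m ≤ mh)
    (hj : mh ≤ j) :
    shiftedPoissonPMF lam m (j + 1) / shiftedPoissonPMF lamh mh (j + 1) =
      shiftedPoissonPMF lam m j / shiftedPoissonPMF lamh mh j *
        (lam * (j + 1 - mh) / (lamh * (j + 1 - m))) := by
  rw [shiftedPoissonPMF_succ lam (hm.trans hj), shiftedPoissonPMF_succ lamh hj]
  have := shiftedPoissonPMF_pos hlamh hj
  have : (m : ℝ) ≤ j := by exact_mod_cast hm.trans hj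
  have : (mh : ℝ) ≤ j := by exact_mod_cast hj
  have : (0 : ℝ) < j + 1 - m := by linarith
  have : (0 : ℝ) < j + 1 - mh := by linarith
  field_simp

lemma shiftedPoissonPMF_sub_nonneg_of_upcrossing {lam lamh : ℝ} (hlam : 0 ≤ lam)
    (hlamh : 0 < lamh) {m mh : ℕ} (hm : m ≤ mh) (i : ℕ)
    (hi : shiftedPoissonPMF lam m i - shiftedPoissonPMF lamh mh i < 0)
    (hi' : 0 ≤ shiftedPoissonPMF lam m (i + 1) - shiftedPoissonPMF lamh mh (i + 1)) (k : ℕ)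
    (hk : i < k) : 0 ≤ shiftedPoissonPMF lam m k - shiftedPoissonPMF lamh mh k := by
  have hmh : mh ≤ i := by
    by_contra! h
    rw [shiftedPoissonPMF_of_lt h, sub_zero] at hi
    exact hi.not_ge (shiftedPoissonPMF_nonneg hlam m i)
  have hsign (j : ℕ) (hj : mh ≤ j) :
      0 ≤ shiftedPoissonPMF lam m j - shiftedPoissonPMF lamh mh j ↔
        1 ≤ shiftedPoissonPMF lam m j / shiftedPoissonPMF lamh mh j := by
    rw [sub_nonneg, one_le_div (shiftedPoissonPMF_pos hlamh hj)]
  have hρ : MonotoneOn (fun j : ℕ => lam * (j + 1 - mh) / (lamh * (j + 1 - m))) (Set.Ici mh) := by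
    intro j hj l _ hjl
    have hmh' : (m : ℝ) ≤ mh := by exact_mod_cast hm
    have hj' : (mh : ℝ) ≤ j := by exact_mod_cast hj
    have hjl' : (j : ℝ) ≤ l := by exact_mod_cast hjl
    rw [div_le_div_iff₀ (by nlinarith) (by nlinarith)]
    nlinarith [mul_nonneg (mul_nonneg hlam hlamh.le)
      (mul_nonneg (sub_nonneg.2 hmh') (sub_nonneg.2 hjl'))]
  refine (hsign k (by omega)).2 (one_le_of_upcrossing_of_monotoneOn_ratio
    (r := fun j => shiftedPoissonPMF lam m j / shiftedPoissonPMF lamh mh j)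
    (fun j hj => shiftedPoissonPMF_div_succ hlamh hm hj) hρ hmh
    (div_nonneg (shiftedPoissonPMF_nonneg hlam m i) (shiftedPoissonPMF_pos hlamh hmh).le) ?_
    ((hsign _ (by omega)).1 hi') k hk)
  exact lt_of_not_ge fun h => hi.not_ge ((hsign i hmh).2 h)

lemma crossesAtMostTwice_shiftedPoissonPMF_sub {lam lamh : ℝ} (hlam : 0 < lam)
    (hlamh : 0 < lamh) (m mh : ℕ) :
    CrossesAtMostTwice fun i => shiftedPoissonPMF lam m i - shiftedPoissonPMF lamh mh i := by
  rcases le_total m mh with hm | hm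
  · exact crossesAtMostTwice_of_nonneg_after_upcrossing
      (shiftedPoissonPMF_sub_nonneg_of_upcrossing hlam.le hlamh hm)
  · convert (crossesAtMostTwice_of_nonneg_after_upcrossing
      (shiftedPoissonPMF_sub_nonneg_of_upcrossing hlamh.le hlam hm)).neg using 1
    funext i
    simp

/-- For shifted Poisson random variables `Y = m + Poisson(λ)` and `Ŷ = m̂ + Poisson(λ̂)`,
the total variation distance is at most twice the Kolmogorov distance. -/
theorem stmt5 (lam lamh : ℝ) (hlam : 0 < lam) (hlamh : 0 < lamh) (m mh : ℕ) :
    (1 / 2) * ∑' i : ℕ, |shiftedPoissonPMF lam m i - shiftedPoissonPMF lamh mh i| ≤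
      2 * ⨆ x : ℕ,
        |∑ i ∈ Finset.range (x + 1),
          (shiftedPoissonPMF lam m i - shiftedPoissonPMF lamh mh i)| := by
  have hsum : HasSum (fun i => shiftedPoissonPMF lam m i - shiftedPoissonPMF lamh mh i) 0 := by
    simpa using (hasSum_shiftedPoissonPMF lam m).sub (hasSum_shiftedPoissonPMF lamh mh)
  exact (crossesAtMostTwice_shiftedPoissonPMF_sub hlam hlamh m mh).half_tsum_abs_le
    hsum.summable.abs hsum.tsum_eq
end

section
/- If two probability distributions P and Q on the integers have at most two crossings (the sign of P(i) − Q(i) changes at most twice as i increases), then the total variation distance between P and Q is at most twice their Kolmogorov distance. -/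
/-!
Write `f = P - Q`, so `∑ f = 0` and `∑ |f| = 2 ∑ f⁺`. With at most two crossings, `f` or `-f` is
nonnegative on one interval `[a, b)` and nonpositive off it, so `∑ f⁺` is `±∑_{[a, b)} f`. That
block sum is a difference of two values of the cumulative sum of `f`, each bounded by the
Kolmogorov distance.
-/

open Finset

noncomputable def cdf (f : ℤ → ℝ) (x : ℤ) : ℝ :=
  ∑' i : ℤ, if i ≤ x then f i else 0

lemma cdf_neg (f : ℤ → ℝ) (x : ℤ) : cdf (-f) x = -cdf f x := by
  simp only [cdf, Pi.neg_apply, ← tsum_neg]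
  exact tsum_congr fun i => by split_ifs <;> simp

lemma summable_ite_le {f : ℤ → ℝ} (hf : Summable f) (x : ℤ) :
    Summable fun i => if i ≤ x then f i else 0 :=
  hf.abs.of_norm_bounded fun i => by split_ifs <;> simp

lemma abs_cdf_le_tsum_abs {f : ℤ → ℝ} (hf : Summable f) (x : ℤ) :
    |cdf f x| ≤ ∑' i, |f i| := by
  refine (norm_tsum_le_tsum_norm (summable_ite_le hf x).norm).trans ?_
  exact (summable_ite_le hf x).norm.tsum_le_tsum (fun i => by split_ifs <;> simp) hf.abs

lemma abs_cdf_sub_cdf_le {f : ℤ → ℝ} (hf : Summable f) (x y : ℤ) :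
    |cdf f y - cdf f x| ≤ 2 * ⨆ z, |cdf f z| := by
  have hbdd : BddAbove (Set.range fun z => |cdf f z|) :=
    ⟨∑' i, |f i|, Set.forall_mem_range.2 (abs_cdf_le_tsum_abs hf)⟩
  calc |cdf f y - cdf f x| ≤ |cdf f y| + |cdf f x| := abs_sub _ _
    _ ≤ 2 * ⨆ z, |cdf f z| := by linarith [le_ciSup hbdd y, le_ciSup hbdd x]

lemma cdf_sub_cdf {f : ℤ → ℝ} (hf : Summable f) {a b : ℤ} (hab : a ≤ b) :
    cdf f (b - 1) - cdf f (a - 1) = ∑ i ∈ Ico a b, f i := by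
  rw [cdf, cdf, ← (summable_ite_le hf _).tsum_sub (summable_ite_le hf _)]
  refine (tsum_eq_sum fun i hi => ?_).trans (sum_congr rfl fun i hi => ?_)
  · rw [mem_Ico] at hi
    split_ifs <;> first | (exfalso; omega) | simp
  · rw [mem_Ico] at hi
    rw [if_pos (by omega), if_neg (by omega), sub_zero]

lemma tsum_abs_eq_two_mul_tsum_posPart {ι : Type*} {f : ι → ℝ} (hf : Summable f)
    (hf0 : ∑' i, f i = 0) : ∑' i, |f i| = 2 * ∑' i, (f i)⁺ := by
  have habs : ∀ i, |f i| = 2 * (f i)⁺ - f i := fun i => by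
    rw [← posPart_add_negPart]
    linarith [posPart_sub_negPart (f i)]
  have hpos : Summable fun i => (f i)⁺ :=
    ((hf.abs.add hf).div_const 2).congr fun i => by rw [habs]; ring
  rw [tsum_congr habs, (hpos.mul_left 2).tsum_sub hf, tsum_mul_left, hf0, sub_zero]

lemma tsum_posPart_eq_sum_Ico {f : ℤ → ℝ} {a b : ℤ}
    (hlt : ∀ i < a, f i ≤ 0) (hmid : ∀ i, a ≤ i → i < b → 0 ≤ f i) (hge : ∀ i, b ≤ i → f i ≤ 0) :
    ∑' i, (f i)⁺ = ∑ i ∈ Ico a b, f i := by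
  refine (tsum_eq_sum fun i hi => ?_).trans (sum_congr rfl fun i hi => ?_)
  · rw [mem_Ico, not_and_or, not_le, not_lt] at hi
    exact posPart_eq_zero.2 (hi.elim (hlt i) (hge i))
  · rw [mem_Ico] at hi
    exact posPart_eq_self.2 (hmid i hi.1 hi.2)

theorem tsum_abs_le_four_mul_iSup_abs_cdf {f : ℤ → ℝ} (hf : Summable f) (hf0 : ∑' i, f i = 0)
    {a b : ℤ} (hab : a ≤ b)
    (hlt : ∀ i < a, f i ≤ 0) (hmid : ∀ i, a ≤ i → i < b → 0 ≤ f i) (hge : ∀ i, b ≤ i → f i ≤ 0) :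
    ∑' i, |f i| ≤ 4 * ⨆ x, |cdf f x| := by
  rw [tsum_abs_eq_two_mul_tsum_posPart hf hf0, tsum_posPart_eq_sum_Ico hlt hmid hge,
    ← cdf_sub_cdf hf hab]
  linarith [le_abs_self (cdf f (b - 1) - cdf f (a - 1)), abs_cdf_sub_cdf_le hf (a - 1) (b - 1)]

theorem tsum_abs_le_four_mul_iSup_abs_cdf_of_nonpos {f : ℤ → ℝ} (hf : Summable f)
    (hf0 : ∑' i, f i = 0) {a b : ℤ} (hab : a ≤ b)
    (hlt : ∀ i < a, 0 ≤ f i) (hmid : ∀ i, a ≤ i → i < b → f i ≤ 0) (hge : ∀ i, b ≤ i → 0 ≤ f i) :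
    ∑' i, |f i| ≤ 4 * ⨆ x, |cdf f x| := by
  have h := tsum_abs_le_four_mul_iSup_abs_cdf (f := -f) hf.neg (by simp [tsum_neg, hf0]) hab
    (fun i hi => neg_nonpos.2 (hlt i hi)) (fun i hi hi' => neg_nonneg.2 (hmid i hi hi'))
    (fun i hi => neg_nonpos.2 (hge i hi))
  simpa only [Pi.neg_apply, abs_neg, cdf_neg] using h

theorem stmt9_general (P Q : ℤ → ℝ)
    (hPs : Summable P) (hP1 : ∑' i : ℤ, P i = 1)
    (hQs : Summable Q) (hQ1 : ∑' i : ℤ, Q i = 1)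
    (hcross : ∃ a b : ℤ, a ≤ b ∧
      (((∀ i < a, P i ≤ Q i) ∧ (∀ i, a ≤ i → i < b → Q i ≤ P i) ∧
          (∀ i, b ≤ i → P i ≤ Q i)) ∨
       ((∀ i < a, Q i ≤ P i) ∧ (∀ i, a ≤ i → i < b → P i ≤ Q i) ∧
          (∀ i, b ≤ i → Q i ≤ P i)))) :
    (1 / 2) * ∑' i : ℤ, |P i - Q i| ≤
      2 * ⨆ x : ℤ, |∑' i : ℤ, if i ≤ x then P i - Q i else 0| := by
  obtain ⟨a, b, hab, hcase⟩ := hcross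
  have hf0 : ∑' i, (P i - Q i) = 0 := by rw [hPs.tsum_sub hQs, hP1, hQ1, sub_self]
  suffices ∑' i, |P i - Q i| ≤ 4 * ⨆ x, |cdf (fun i => P i - Q i) x| by
    unfold cdf at this; linarith
  rcases hcase with ⟨hlt, hmid, hge⟩ | ⟨hlt, hmid, hge⟩
  · exact tsum_abs_le_four_mul_iSup_abs_cdf (hPs.sub hQs) hf0 hab
      (fun i hi => sub_nonpos.2 (hlt i hi)) (fun i hi hi' => sub_nonneg.2 (hmid i hi hi'))
      (fun i hi => sub_nonpos.2 (hge i hi))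
  · exact tsum_abs_le_four_mul_iSup_abs_cdf_of_nonpos (hPs.sub hQs) hf0 hab
      (fun i hi => sub_nonneg.2 (hlt i hi)) (fun i hi hi' => sub_nonpos.2 (hmid i hi hi'))
      (fun i hi => sub_nonneg.2 (hge i hi))

/-- If two probability distributions on ℤ have at most two crossings (the sign of `P - Q`
changes at most twice), then their total variation distance is at most twice their
Kolmogorov distance. -/
theorem stmt9 (P Q : ℤ → ℝ)
    (hP0 : ∀ i, 0 ≤ P i) (hPs : Summable P) (hP1 : ∑' i : ℤ, P i = 1)
    (hQ0 : ∀ i, 0 ≤ Q i) (hQs : Summable Q) (hQ1 : ∑' i : ℤ, Q i = 1)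
    (hcross : ∃ a b : ℤ, a ≤ b ∧
      (((∀ i < a, P i ≤ Q i) ∧ (∀ i, a ≤ i → i < b → Q i ≤ P i) ∧
          (∀ i, b ≤ i → P i ≤ Q i)) ∨
       ((∀ i < a, Q i ≤ P i) ∧ (∀ i, a ≤ i → i < b → P i ≤ Q i) ∧
          (∀ i, b ≤ i → Q i ≤ P i)))) :
    (1 / 2) * ∑' i : ℤ, |P i - Q i| ≤
      2 * ⨆ x : ℤ, |∑' i : ℤ, if i ≤ x then P i - Q i else 0| :=
  stmt9_general P Q hPs hP1 hQs hQ1 hcross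
end

section
/- Let X be a random variable on {0,...,n} with cdf F_X, let Z_1,...,Z_k be i.i.d. copies of X, and let F̂_X(ℓ) = (1/k)·#{i : Z_i ≤ ℓ} be the empirical cdf. If k = 4/(δ·ε²) then with probability at least 1 − δ, max_{0 ≤ ℓ ≤ n} |F̂_X(ℓ) − F_X(ℓ)| ≤ ε. -/
/-!
Revealing the samples level by level, the normalized deviation
`Ω_ℓ = (F̂(ℓ) - F(ℓ)) / (1 - F(ℓ))` is a martingale in `ℓ`: a sample not yet seen at level `ℓ`
falls to level `ℓ + 1` with conditional probability `(F(ℓ+1) - F(ℓ)) / (1 - F(ℓ))`, and the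
normalization makes the expected increment vanish. While `F(ℓ) ≤ 1/2` each sample contributes
variance at most `1` to `k Ω_ℓ`, so Doob's `L²` maximal inequality bounds the probability that
`k |Ω_ℓ| > k ε` for some such `ℓ` by `1 / (k ε²)`; and `|F̂(ℓ) - F(ℓ)| ≤ |Ω_ℓ|`. Reversing the
order of `{0, …, n}` exchanges `F` with `1 - F`, so the levels with `F(ℓ) > 1/2` obey the same
bound, and the two bounds add up to `2 / (k ε²) ≤ δ / 2`.
-/

open MeasureTheory

/-- The empirical cdf at `ℓ` of the samples `z`. -/
noncomputable def empCDF {n k : ℕ} (z : Fin k → Fin (n + 1)) (ℓ : ℕ) : ℝ :=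
  ((Finset.univ.filter (fun i => (z i : ℕ) ≤ ℓ)).card : ℝ) / k

section Independence

open ProbabilityTheory

variable {ι α : Type*} [Fintype ι] [DecidableEq ι] [MeasurableSpace α]
  {μ : ι → Measure α} [∀ i, IsProbabilityMeasure (μ i)]

theorem integral_comp_eval_mul_of_update_eq {G : α → ℝ} {H : (ι → α) → ℝ} (hG : Measurable G)
    (hH : Measurable H) (i : ι) (hHi : ∀ z x, H (Function.update z i x) = H z) :
    ∫ z, G (z i) * H z ∂Measure.pi μ = (∫ x, G x ∂μ i) * ∫ z, H z ∂Measure.pi μ := by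
  obtain ⟨a⟩ := nonempty_of_isProbabilityMeasure (μ i)
  let T : Finset ι := {i}ᶜ
  let extend : (T → α) → ι → α := fun w j => if h : j ∈ T then w ⟨j, h⟩ else a
  have hextend : Measurable extend := by
    refine measurable_pi_lambda _ fun j => ?_
    by_cases h : j ∈ T
    · simpa [extend, h] using measurable_pi_apply (⟨j, h⟩ : T)
    · simp [extend, h]
  have hH_extend : ∀ z, H (extend fun j : T => z j) = H z := by
    intro z
    rw [← hHi z a]
    congr 1
    funext j
    by_cases h : j = i
    · subst h
      simp [extend, T]
    · simp [extend, T, h]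
  have hindep : IndepFun (fun z (j : ({i} : Finset ι)) => z j) (fun z (j : T) => z j)
      (Measure.pi μ) :=
    (iIndepFun_pi (X := fun _ => id) fun _ => aemeasurable_id).indepFun_finset _ _
      disjoint_compl_right fun j => measurable_pi_apply j
  have hfactor := hindep.integral_comp_mul_comp
    (f := fun y => G (y ⟨i, Finset.mem_singleton_self i⟩)) (g := H ∘ extend)
    (measurable_pi_lambda _ fun _ => measurable_pi_apply _).aemeasurable
    (measurable_pi_lambda _ fun _ => measurable_pi_apply _).aemeasurable
    (by exact (hG.comp (measurable_pi_apply _)).aestronglyMeasurable)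
    (hH.comp hextend).aestronglyMeasurable
  simp only [Function.comp_def, hH_extend] at hfactor
  rw [← integral_comp_eval (μ := μ) hG.aestronglyMeasurable]
  exact hfactor

theorem integral_sq_sum_comp_eval [Finite α] [DiscreteMeasurableSpace α] {G : α → ℝ}
    (hG : ∀ i, ∫ x, G x ∂μ i = 0) :
    ∫ z, (∑ i, G (z i)) ^ 2 ∂Measure.pi μ = ∑ i, ∫ x, G x ^ 2 ∂μ i := by
  simp_rw [sq, Finset.sum_mul_sum]
  rw [integral_finsetSum _ fun _ _ => Integrable.of_finite]
  refine Finset.sum_congr rfl fun i _ => ?_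
  rw [integral_finsetSum _ fun _ _ => Integrable.of_finite, Finset.sum_eq_single i]
  · exact integral_comp_eval (X := fun _ => α) (f := fun x => G x * G x)
      Measurable.of_discrete.aestronglyMeasurable
  · intro j _ hji
    rw [integral_comp_eval_mul_of_update_eq .of_discrete .of_discrete i
      fun z x => by rw [Function.update_of_ne hji], hG, zero_mul]
  · simp

end Independence

theorem MeasureTheory.Submartingale.mul_measureReal_exists_le_le_integral {Ω : Type*}
    {m0 : MeasurableSpace Ω} {μ : Measure Ω} [IsFiniteMeasure μ] {𝒢 : Filtration ℕ m0}
    {f : ℕ → Ω → ℝ} (hsub : Submartingale f 𝒢 μ) (hnonneg : 0 ≤ f) {ε : ℝ} (hε : 0 ≤ ε)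
    (m : ℕ) :
    ε * μ.real {ω | ∃ ℓ ≤ m, ε ≤ f ℓ ω} ≤ ∫ ω, f m ω ∂μ := by
  have hdoob := ENNReal.toReal_mono ENNReal.ofReal_ne_top
    (maximal_ineq hsub hnonneg (ε := ⟨ε, hε⟩) m)
  simp only [Finset.le_sup'_iff, Finset.mem_range, Nat.lt_succ_iff] at hdoob
  rw [ENNReal.toReal_mul, ENNReal.toReal_ofReal
    (setIntegral_nonneg_of_ae_restrict (Filter.Eventually.of_forall (hnonneg m)))] at hdoob
  exact hdoob.trans
    (setIntegral_le_integral (hsub.integrable m) (Filter.Eventually.of_forall (hnonneg m)))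

namespace DKW

variable {n k : ℕ} (μ : Measure (Fin (n + 1)))

noncomputable def cdf (ℓ : ℕ) : ℝ := μ.real {j : Fin (n + 1) | (j : ℕ) ≤ ℓ}

noncomputable def normDev (ℓ : ℕ) (x : Fin (n + 1)) : ℝ :=
  ({j : Fin (n + 1) | (j : ℕ) ≤ ℓ}.indicator 1 x - cdf μ ℓ) / (1 - cdf μ ℓ)

/-- `k` times the paper's `Ω_ℓ`. -/
noncomputable def devSum (ℓ : ℕ) (z : Fin k → Fin (n + 1)) : ℝ := ∑ i, normDev μ ℓ (z i)

variable {μ}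

lemma cdf_mono [IsFiniteMeasure μ] : Monotone (cdf μ) := fun _ _ h =>
  measureReal_mono fun j (hj : (j : ℕ) ≤ _) => hj.trans h

lemma cdf_of_le [IsProbabilityMeasure μ] {ℓ : ℕ} (h : n ≤ ℓ) : cdf μ ℓ = 1 := by
  rw [cdf, ← probReal_univ (μ := μ)]
  congr 1
  ext j
  simpa using (Nat.le_of_lt_succ j.isLt).trans h

lemma cdf_map_rev [IsProbabilityMeasure μ] {ℓ : ℕ} (hℓ : ℓ < n) :
    cdf (μ.map Fin.rev) (n - 1 - ℓ) = 1 - cdf μ ℓ := by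
  rw [cdf, map_measureReal_apply Measurable.of_discrete MeasurableSet.of_discrete, cdf,
    ← probReal_compl_eq_one_sub MeasurableSet.of_discrete]
  congr 1
  ext j
  simp only [Set.mem_preimage, Set.mem_ofPred_eq, Set.mem_compl_iff, Fin.val_rev]
  omega

lemma integral_normDev [IsProbabilityMeasure μ] (ℓ : ℕ) : ∫ x, normDev μ ℓ x ∂μ = 0 := by
  simp only [normDev]
  rw [integral_div, integral_sub Integrable.of_finite (integrable_const _),
    integral_indicator_one MeasurableSet.of_discrete, integral_const]
  simp [cdf]

lemma normDev_of_le {ℓ : ℕ} (h : cdf μ ℓ ≠ 1) {x : Fin (n + 1)} (hx : (x : ℕ) ≤ ℓ) :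
    normDev μ ℓ x = 1 := by
  rw [normDev, Set.indicator_of_mem (show x ∈ {j : Fin (n + 1) | (j : ℕ) ≤ ℓ} from hx)]
  exact div_self (sub_ne_zero.mpr (Ne.symm h))

lemma sq_normDev_le_one {ℓ : ℕ} (h : cdf μ ℓ ≤ 1 / 2) (x : Fin (n + 1)) :
    normDev μ ℓ x ^ 2 ≤ 1 := by
  have h0 : 0 ≤ cdf μ ℓ := measureReal_nonneg
  rw [normDev, div_pow, div_le_one (by nlinarith)]
  by_cases hx : (x : ℕ) ≤ ℓ
  · rw [Set.indicator_of_mem (show x ∈ {j : Fin (n + 1) | (j : ℕ) ≤ ℓ} from hx)]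
    simp
  · rw [Set.indicator_of_notMem (show x ∉ {j : Fin (n + 1) | (j : ℕ) ≤ ℓ} from hx)]
    nlinarith

lemma one_sub_cdf_mul_devSum {ℓ : ℕ} (h : cdf μ ℓ ≠ 1) (z : Fin k → Fin (n + 1)) :
    (1 - cdf μ ℓ) * devSum μ ℓ z = k * (empCDF z ℓ - cdf μ ℓ) := by
  have hne : 1 - cdf μ ℓ ≠ 0 := sub_ne_zero.mpr (Ne.symm h)
  rcases Nat.eq_zero_or_pos k with rfl | hk
  · simp [devSum]
  simp only [devSum, normDev, Finset.mul_sum, mul_div_cancel₀ _ hne, empCDF,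
    Finset.sum_sub_distrib]
  simp [Set.indicator_apply, Finset.sum_boole, Finset.card_univ]
  field_simp

lemma mul_lt_abs_devSum (hk : 0 < k) {ℓ : ℕ} (hℓ : cdf μ ℓ < 1) {ε : ℝ}
    {z : Fin k → Fin (n + 1)} (hdev : ε < |empCDF z ℓ - cdf μ ℓ|) :
    k * ε < |devSum μ ℓ z| := by
  have hk' : (0 : ℝ) < k := by exact_mod_cast hk
  have h0 : 0 ≤ cdf μ ℓ := measureReal_nonneg
  calc k * ε < k * |empCDF z ℓ - cdf μ ℓ| := mul_lt_mul_of_pos_left hdev hk'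
    _ = (1 - cdf μ ℓ) * |devSum μ ℓ z| := by
      rw [← abs_of_pos hk', ← abs_mul, ← one_sub_cdf_mul_devSum hℓ.ne z, abs_mul,
        abs_of_pos (by linarith : 0 < 1 - cdf μ ℓ)]
    _ ≤ |devSum μ ℓ z| := mul_le_of_le_one_left (abs_nonneg _) (by linarith)

lemma empCDF_of_le (hk : 0 < k) {ℓ : ℕ} (hℓ : n ≤ ℓ) (z : Fin k → Fin (n + 1)) :
    empCDF z ℓ = 1 := by
  rw [empCDF, Finset.filter_true_of_mem fun i _ => (Nat.le_of_lt_succ (z i).isLt).trans hℓ,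
    Finset.card_univ, Fintype.card_fin]
  exact div_self (by positivity)

lemma empCDF_rev (hk : 0 < k) {ℓ : ℕ} (hℓ : ℓ < n) (z : Fin k → Fin (n + 1)) :
    empCDF (fun i => (z i).rev) (n - 1 - ℓ) = 1 - empCDF z ℓ := by
  have hcompl : Finset.univ.filter (fun i => ((z i).rev : ℕ) ≤ n - 1 - ℓ)
      = (Finset.univ.filter (fun i => (z i : ℕ) ≤ ℓ))ᶜ := by
    ext i
    simp only [Finset.mem_filter, Finset.mem_univ, true_and, Finset.mem_compl, Fin.val_rev]
    omega
  rw [empCDF, empCDF, hcompl, Finset.card_compl, Fintype.card_fin,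
    Nat.cast_sub ((Finset.card_le_univ _).trans_eq (Fintype.card_fin k))]
  field_simp

/-- `truncate ℓ z` records which samples are `≤ ℓ` and their values, and nothing else. -/
def truncate (ℓ : ℕ) (z : Fin k → Fin (n + 1)) : Fin k → Fin (n + 1) :=
  fun i => if (z i : ℕ) ≤ ℓ then z i else Fin.last n

lemma val_truncate_le_iff {ℓ ℓ' : ℕ} (h : ℓ' ≤ ℓ) (z : Fin k → Fin (n + 1)) (i : Fin k) :
    (truncate ℓ z i : ℕ) ≤ ℓ' ↔ (z i : ℕ) ≤ ℓ' := by
  unfold truncate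
  split_ifs with hz
  · rfl
  · have := (z i).isLt
    simp only [Fin.val_last]
    omega

lemma truncate_truncate {ℓ L : ℕ} (h : ℓ ≤ L) (z : Fin k → Fin (n + 1)) :
    truncate ℓ (truncate L z) = truncate ℓ z := by
  funext i
  change (if (truncate L z i : ℕ) ≤ ℓ then truncate L z i else Fin.last n) = truncate ℓ z i
  simp only [val_truncate_le_iff h]
  by_cases h1 : (z i : ℕ) ≤ ℓ
  · simp [truncate, h1, h1.trans h]
  · simp [truncate, h1]

lemma truncate_update_last {ℓ : ℕ} (z : Fin k → Fin (n + 1)) {i : Fin k}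
    (hi : ¬ (z i : ℕ) ≤ ℓ) :
    truncate ℓ (Function.update z i (Fin.last n)) = truncate ℓ z := by
  funext j
  by_cases hj : j = i
  · subst hj
    have : ¬ n ≤ ℓ := fun h => hi ((Nat.le_of_lt_succ (z j).isLt).trans h)
    simp [truncate, hi, this]
  · simp [truncate, Function.update_of_ne hj]

lemma devSum_truncate {ℓ ℓ' : ℕ} (h : ℓ' ≤ ℓ) (z : Fin k → Fin (n + 1)) :
    devSum μ ℓ' (truncate ℓ z) = devSum μ ℓ' z := by
  refine Finset.sum_congr rfl fun i _ => ?_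
  simp only [normDev, Set.indicator_apply, Set.mem_ofPred_eq, val_truncate_le_iff h,
    Pi.one_apply]

variable (k) in
def pastFiltration : Filtration ℕ (inferInstance : MeasurableSpace (Fin k → Fin (n + 1))) where
  seq ℓ := MeasurableSpace.comap (truncate ℓ) inferInstance
  mono' ℓ L h := by
    change MeasurableSpace.comap (truncate ℓ) _ ≤ MeasurableSpace.comap (truncate L) _
    rw [← funext (truncate_truncate (k := k) h), ← Function.comp_def,
      ← MeasurableSpace.comap_comp]
    exact MeasurableSpace.comap_mono (Measurable.of_discrete (f := truncate ℓ)).comap_le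
  le' ℓ := (Measurable.of_discrete (f := truncate ℓ)).comap_le

variable [IsProbabilityMeasure μ]

local notation "ℙ" => Measure.pi fun _ : Fin k => μ

lemma integral_truncate_mul_devSum_succ_sub {ℓ : ℕ} (hℓ : cdf μ (ℓ + 1) < 1)
    (g : (Fin k → Fin (n + 1)) → ℝ) :
    ∫ z, g (truncate ℓ z) * (devSum μ (ℓ + 1) z - devSum μ ℓ z) ∂ℙ = 0 := by
  have hd : ∀ x : Fin (n + 1), (x : ℕ) ≤ ℓ → normDev μ (ℓ + 1) x - normDev μ ℓ x = 0 :=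
    fun x hx => by
      rw [sub_eq_zero, normDev_of_le hℓ.ne (hx.trans ℓ.le_succ),
        normDev_of_le ((cdf_mono ℓ.le_succ).trans_lt hℓ).ne hx]
  have hsplit : ∀ z, g (truncate ℓ z) * (devSum μ (ℓ + 1) z - devSum μ ℓ z)
      = ∑ i, (normDev μ (ℓ + 1) (z i) - normDev μ ℓ (z i))
          * g (truncate ℓ (Function.update z i (Fin.last n))) := by
    intro z
    rw [devSum, devSum, ← Finset.sum_sub_distrib, Finset.mul_sum]
    refine Finset.sum_congr rfl fun i _ => ?_
    by_cases hz : (z i : ℕ) ≤ ℓ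
    · rw [hd _ hz, zero_mul, mul_zero]
    · rw [truncate_update_last z hz, mul_comm]
  simp_rw [hsplit]
  rw [integral_finsetSum _ fun i _ => Integrable.of_finite]
  refine Finset.sum_eq_zero fun i _ => ?_
  rw [integral_comp_eval_mul_of_update_eq (G := fun x => normDev μ (ℓ + 1) x - normDev μ ℓ x)
    Measurable.of_discrete Measurable.of_discrete i fun z x => by rw [Function.update_idem]]
  simp [integral_sub Integrable.of_finite Integrable.of_finite, integral_normDev]

lemma setIntegral_sq_devSum_le_succ {ℓ : ℕ} (hℓ : cdf μ (ℓ + 1) < 1)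
    (t : Set (Fin k → Fin (n + 1))) :
    ∫ z in truncate ℓ ⁻¹' t, devSum μ ℓ z ^ 2 ∂ℙ
      ≤ ∫ z in truncate ℓ ⁻¹' t, devSum μ (ℓ + 1) z ^ 2 ∂ℙ := by
  set X := devSum (k := k) μ ℓ
  set Y := devSum (k := k) μ (ℓ + 1)
  have horth : ∫ z in truncate ℓ ⁻¹' t, X z * (Y z - X z) ∂ℙ = 0 := by
    rw [← integral_indicator MeasurableSet.of_discrete,
      ← integral_truncate_mul_devSum_succ_sub hℓ (t.indicator X)]
    congr 1 with z
    by_cases hz : truncate ℓ z ∈ t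
    · simp [Set.indicator_of_mem hz, Set.indicator_of_mem (Set.mem_preimage.mpr hz), X,
        devSum_truncate le_rfl, Y]
    · simp [Set.indicator_of_notMem hz, Set.indicator_of_notMem (mt Set.mem_preimage.mp hz)]
  calc ∫ z in truncate ℓ ⁻¹' t, X z ^ 2 ∂ℙ
      = ∫ z in truncate ℓ ⁻¹' t, X z ^ 2 + 2 * (X z * (Y z - X z)) ∂ℙ := by
        rw [integral_add Integrable.of_finite Integrable.of_finite, integral_const_mul, horth]
        ring
    _ ≤ ∫ z in truncate ℓ ⁻¹' t, Y z ^ 2 ∂ℙ :=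
        setIntegral_mono Integrable.of_finite Integrable.of_finite fun z => by
          nlinarith [sq_nonneg (Y z - X z)]

/-- Stopped at `m`: beyond it `1 - F` may vanish and `devSum` is no longer a martingale. -/
lemma submartingale_sq_devSum {m : ℕ} (hm : cdf μ m < 1) :
    Submartingale (fun ℓ z => devSum μ (min ℓ m) z ^ 2) (pastFiltration k) ℙ := by
  refine submartingale_of_setIntegral_le_succ (fun ℓ => ?_) (fun _ => Integrable.of_finite)
    fun ℓ s hs => ?_
  · have : (fun z => devSum μ (min ℓ m) z ^ 2)
        = (fun w => devSum μ (min ℓ m) w ^ 2) ∘ truncate (k := k) ℓ :=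
      funext fun z => by simp [devSum_truncate (min_le_left ℓ m)]
    rw [this]
    exact (Measurable.of_discrete.comp (comap_measurable _)).stronglyMeasurable
  rcases le_or_gt m ℓ with h | h
  · simp [min_eq_right h, min_eq_right (h.trans ℓ.le_succ)]
  obtain ⟨t, -, rfl⟩ := MeasurableSpace.measurableSet_comap.mp hs
  rw [min_eq_left h.le, min_eq_left h]
  exact setIntegral_sq_devSum_le_succ ((cdf_mono h).trans_lt hm) t

lemma integral_sq_devSum_le {m : ℕ} (hm : cdf μ m ≤ 1 / 2) : ∫ z, devSum μ m z ^ 2 ∂ℙ ≤ k := by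
  simp only [devSum]
  rw [integral_sq_sum_comp_eval fun _ => integral_normDev m]
  calc ∑ _i : Fin k, ∫ x, normDev μ m x ^ 2 ∂μ ≤ ∑ _i : Fin k, (1 : ℝ) :=
        Finset.sum_le_sum fun _ _ => (integral_mono Integrable.of_finite (integrable_const 1)
          (sq_normDev_le_one hm)).trans (by simp)
    _ = k := by simp

lemma exists_isGreatest_cdf_le_half (h : ∃ ℓ, cdf μ ℓ ≤ 1 / 2) :
    ∃ m, IsGreatest {ℓ | cdf μ ℓ ≤ 1 / 2} m := by
  have hlt : ∀ ℓ, cdf μ ℓ ≤ 1 / 2 → ℓ < n := fun ℓ h => by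
    by_contra! hn
    rw [cdf_of_le hn] at h
    norm_num at h
  obtain ⟨ℓ₀, hℓ₀⟩ := h
  exact ⟨Nat.findGreatest (fun ℓ => cdf μ ℓ ≤ 1 / 2) n,
    Nat.findGreatest_spec (P := fun ℓ => cdf μ ℓ ≤ 1 / 2) (hlt ℓ₀ hℓ₀).le hℓ₀,
    fun ℓ h => Nat.le_findGreatest (hlt ℓ h).le h⟩

variable (k μ) in
def deviationBelowHalf (ε : ℝ) : Set (Fin k → Fin (n + 1)) :=
  {z | ∃ ℓ, cdf μ ℓ ≤ 1 / 2 ∧ ε < |empCDF z ℓ - cdf μ ℓ|}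

lemma measureReal_deviationBelowHalf_le (hk : 0 < k) {ε : ℝ} (hε : 0 < ε) :
    (ℙ).real (deviationBelowHalf k μ ε) ≤ 1 / (k * ε ^ 2) := by
  by_cases hex : ∃ ℓ, cdf μ ℓ ≤ 1 / 2
  swap
  · have hempty : deviationBelowHalf k μ ε = (∅ : Set (Fin k → Fin (n + 1))) :=
      Set.eq_empty_of_forall_notMem fun _ ⟨ℓ, hℓ, _⟩ => hex ⟨ℓ, hℓ⟩
    rw [hempty, measureReal_empty]
    positivity
  obtain ⟨m, hm, hle⟩ := exists_isGreatest_cdf_le_half hex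
  have hsub : deviationBelowHalf k μ ε
      ⊆ {z | ∃ ℓ ≤ m, (k * ε) ^ 2 ≤ devSum μ (min ℓ m) z ^ 2} := by
    rintro z ⟨ℓ, hℓ, hdev⟩
    refine ⟨ℓ, hle hℓ, ?_⟩
    rw [min_eq_left (hle hℓ), ← sq_abs (devSum μ ℓ z)]
    exact pow_le_pow_left₀ (by positivity)
      (mul_lt_abs_devSum hk (hℓ.trans_lt (by norm_num)) hdev).le 2
  have hdoob := (submartingale_sq_devSum (k := k) (hm.trans_lt (by norm_num)))
    |>.mul_measureReal_exists_le_le_integral (fun ℓ z => sq_nonneg _) (sq_nonneg (k * ε)) m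
  simp only [min_self] at hdoob
  calc (ℙ).real (deviationBelowHalf k μ ε)
      ≤ (ℙ).real {z | ∃ ℓ ≤ m, (k * ε) ^ 2 ≤ devSum μ (min ℓ m) z ^ 2} := measureReal_mono hsub
    _ ≤ k / (k * ε) ^ 2 := by
        rw [le_div_iff₀ (by positivity), mul_comm]
        exact hdoob.trans (integral_sq_devSum_le hm)
    _ = 1 / (k * ε ^ 2) := by field_simp

/-- At `ℓ = n` there is no deviation; below `n`, reversing `{0, …, n}` turns `F(ℓ) > 1/2`
into `1 - F(ℓ) < 1/2`. -/
lemma deviation_subset_union (hk : 0 < k) {ε : ℝ} (hε : 0 < ε) :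
    {z : Fin k → Fin (n + 1) | ∃ ℓ ≤ n, ε < |empCDF z ℓ - cdf μ ℓ|} ⊆ deviationBelowHalf k μ ε ∪
      (fun z i => (z i).rev) ⁻¹' deviationBelowHalf k (μ.map Fin.rev) ε := by
  rintro z ⟨ℓ, hℓn, hdev⟩
  by_cases hℓ : cdf μ ℓ ≤ 1 / 2
  · exact Or.inl ⟨ℓ, hℓ, hdev⟩
  have hℓn' : ℓ < n := by
    refine lt_of_le_of_ne hℓn fun h => ?_
    rw [h, empCDF_of_le hk le_rfl, cdf_of_le le_rfl, sub_self, abs_zero] at hdev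
    exact hε.not_gt hdev
  refine Or.inr ⟨n - 1 - ℓ, by rw [cdf_map_rev hℓn']; linarith, ?_⟩
  rw [empCDF_rev hk hℓn', cdf_map_rev hℓn', sub_sub_sub_cancel_left, abs_sub_comm]
  exact hdev

lemma measureReal_exists_deviation_le (hk : 0 < k) {ε : ℝ} (hε : 0 < ε) :
    (ℙ).real {z | ∃ ℓ ≤ n, ε < |empCDF z ℓ - cdf μ ℓ|} ≤ 2 / (k * ε ^ 2) := by
  have := Measure.isProbabilityMeasure_map (μ := μ)
    (Measurable.of_discrete (f := Fin.rev)).aemeasurable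
  have hmap : (ℙ).map (fun z i => (z i).rev) = Measure.pi fun _ : Fin k => μ.map Fin.rev :=
    Measure.pi_map_pi fun _ => Measurable.of_discrete.aemeasurable
  calc (ℙ).real {z | ∃ ℓ ≤ n, ε < |empCDF z ℓ - cdf μ ℓ|}
      ≤ (ℙ).real (deviationBelowHalf k μ ε) + (ℙ).real
          ((fun z i => (z i).rev) ⁻¹' deviationBelowHalf k (μ.map Fin.rev) ε) :=
        (measureReal_mono (deviation_subset_union hk hε)).trans (measureReal_union_le _ _)
    _ = (ℙ).real (deviationBelowHalf k μ ε) + (Measure.pi fun _ : Fin k => μ.map Fin.rev).real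
          (deviationBelowHalf k (μ.map Fin.rev) ε) := by
        rw [← hmap, map_measureReal_apply Measurable.of_discrete MeasurableSet.of_discrete]
    _ ≤ 1 / (k * ε ^ 2) + 1 / (k * ε ^ 2) :=
        add_le_add (measureReal_deviationBelowHalf_le hk hε)
          (measureReal_deviationBelowHalf_le hk hε)
    _ = 2 / (k * ε ^ 2) := by ring

end DKW

/-- Weak DKW inequality: with `k = 4/(δ·ε²)` i.i.d. samples from a random variable on
`{0,...,n}`, with probability at least `1 − δ` the empirical cdf is uniformly within `ε`
of the true cdf. -/
theorem stmt10 {n k : ℕ} (μ : Measure (Fin (n + 1))) [IsProbabilityMeasure μ]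
    (ε δ : ℝ) (hε : 0 < ε) (hδ : 0 < δ) (hk : 4 / (δ * ε ^ 2) ≤ (k : ℝ)) :
    ENNReal.ofReal (1 - δ) ≤
      (Measure.pi fun _ : Fin k => μ)
        {z | ∀ ℓ ≤ n, |empCDF z ℓ - (μ {j : Fin (n + 1) | (j : ℕ) ≤ ℓ}).toReal| ≤ ε} := by
  set good := {z : Fin k → Fin (n + 1) |
    ∀ ℓ ≤ n, |empCDF z ℓ - (μ {j : Fin (n + 1) | (j : ℕ) ≤ ℓ}).toReal| ≤ ε}
  have hk0 : (0 : ℝ) < k := (by positivity : 0 < 4 / (δ * ε ^ 2)).trans_le hk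
  have hbad := DKW.measureReal_exists_deviation_le (μ := μ) (Nat.cast_pos.mp hk0) hε
  have hδk : 2 / (k * ε ^ 2) ≤ δ := by
    rw [div_le_iff₀ (by positivity)] at hk ⊢
    nlinarith
  have hcompl : goodᶜ = {z | ∃ ℓ ≤ n, ε < |empCDF z ℓ - DKW.cdf μ ℓ|} := by
    ext z
    simp [good, DKW.cdf, Measure.real]
  have hgood := probReal_compl_eq_one_sub (μ := Measure.pi fun _ : Fin k => μ)
    (MeasurableSet.of_discrete (s := good))
  rw [hcompl] at hgood
  rw [← ofReal_measureReal]
  exact ENNReal.ofReal_le_ofReal (by linarith)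
end

section
/- Fix a random variable X on {0,...,n} and for ℓ = 0,...,n define Λ_ℓ = F̂_X(ℓ) − F_X(ℓ) where F̂_X is the empirical cdf from k i.i.d. samples. Then for ℓ ≥ 1 with F_X(ℓ−1) < 1, E[Λ_ℓ | Λ_{ℓ−1} = m/k − F_X(ℓ−1)] = ((1 − F_X(ℓ)) / (1 − F_X(ℓ−1))) · Λ_{ℓ−1}; equivalently, the sequence Ω*_ℓ = Λ_ℓ/(1 − F_X(ℓ)) is a martingale in ℓ. -/
/-!
Split the samples according to whether they fall in `A = {x ≤ ℓ - 1}`. If `z i ∉ A`, moving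
`z i` anywhere else in `Aᶜ` leaves the number of samples in `A` unchanged, so after conditioning
on that number being `m`, a sample outside `A` is still distributed according to `μ` restricted
to `Aᶜ`. Hence the `k - m` samples outside `A` contribute on average
`(k - m) (F(ℓ) - F(ℓ - 1)) / (1 - F(ℓ - 1))` samples to `{ℓ}`, and the identity is algebra.
-/

open MeasureTheory Finset

noncomputable def trueCDF {n : ℕ} (μ : Measure (Fin (n + 1))) (t : ℕ) : ℝ :=
  (μ {j : Fin (n + 1) | (j : ℕ) ≤ t}).toReal

section SampleCounts

variable {ι α : Type*} [Fintype ι] [DecidableEq ι] [DecidableEq α]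

theorem card_filter_funSplitAt_symm_mem {A : Finset α} {x : α} (hx : x ∉ A) (i : ι)
    (r : {j // j ≠ i} → α) :
    #{j | (Equiv.funSplitAt i α).symm (x, r) j ∈ A} = #{j | r j ∈ A} := by
  have hne (j : {j // j ≠ i}) : (j : ι) = i ↔ False := iff_false_intro j.2
  rw [card_filter, card_filter, Fintype.sum_eq_add_sum_subtype_ne _ i]
  simp [hx, hne]

theorem card_filter_mem_add_card_filter_mem_sdiff {A B : Finset α} (hAB : A ⊆ B) (z : ι → α) :
    #{j | z j ∈ A} + #{j | z j ∈ B \ A} = #{j | z j ∈ B} := by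
  rw [← card_union_of_disjoint (disjoint_filter.2 fun j _ hA hBA => (mem_sdiff.1 hBA).2 hA),
    ← filter_or]
  congr 1
  ext j
  have := @hAB (z j)
  simp only [mem_filter, mem_univ, true_and, mem_sdiff]
  tauto

variable [Fintype α] {R : Type*} [CommSemiring R]

theorem sum_prod_mul_apply_of_card_filter_eq (w : α → R) (A : Finset α) (m : ℕ) (i : ι)
    {f : α → R} (hf : ∀ x ∈ A, f x = 0) :
    ∑ z : ι → α with #{j | z j ∈ A} = m, (∏ j, w (z j)) * f (z i) =
      (∑ x, w x * f x) * ∑ r : {j // j ≠ i} → α with #{j | r j ∈ A} = m, ∏ j, w (r j) := by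
  rw [sum_filter, sum_filter, ← (Equiv.funSplitAt i α).symm.sum_comp, Fintype.sum_prod_type,
    sum_mul]
  refine sum_congr rfl fun x _ => ?_
  rw [mul_sum]
  refine sum_congr rfl fun r _ => ?_
  by_cases hx : x ∈ A
  · simp [hf x hx]
  · rw [card_filter_funSplitAt_symm_mem hx, Fintype.prod_eq_mul_prod_subtype_ne _ i]
    have hne (j : {j // j ≠ i}) : (j : ι) = i ↔ False := iff_false_intro j.2
    split_ifs <;> simp [hne]; ring

theorem sum_mul_sum_prod_mul_card_filter_comm (w : α → R) {A C D : Finset α} (hC : Disjoint A C)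
    (hD : Disjoint A D) (m : ℕ) :
    (∑ x ∈ D, w x) * ∑ z : ι → α with #{j | z j ∈ A} = m, (∏ j, w (z j)) * #{j | z j ∈ C} =
      (∑ x ∈ C, w x) * ∑ z : ι → α with #{j | z j ∈ A} = m, (∏ j, w (z j)) * #{j | z j ∈ D} := by
  have hsplit : ∀ E : Finset α, Disjoint A E →
      ∑ z : ι → α with #{j | z j ∈ A} = m, (∏ j, w (z j)) * #{j | z j ∈ E} =
        ∑ i : ι, (∑ x ∈ E, w x) *
          ∑ r : {j // j ≠ i} → α with #{j | r j ∈ A} = m, ∏ j, w (r j) := by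
    intro E hE
    simp_rw [natCast_card_filter, mul_sum]
    rw [sum_comm]
    refine sum_congr rfl fun i _ => ?_
    rw [sum_prod_mul_apply_of_card_filter_eq w A m i fun x hx => if_neg (disjoint_left.mp hE hx)]
    simp [sum_ite_mem, mul_sum]
  rw [hsplit C hC, hsplit D hD, mul_sum, mul_sum]
  exact sum_congr rfl fun i _ => by ring

theorem sum_prod_mul_sub_of_card_filter_eq [Nonempty ι] (w : α → ℝ) (hw : ∑ x, w x = 1)
    {A B : Finset α} (hAB : A ⊆ B) (hA : ∑ x ∈ A, w x ≠ 1) (m : ℕ) :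
    ∑ z : ι → α with #{j | z j ∈ A} = m,
        (∏ j, w (z j)) * (#{j | z j ∈ B} / Fintype.card ι - ∑ x ∈ B, w x) =
      (1 - ∑ x ∈ B, w x) / (1 - ∑ x ∈ A, w x) * (m / Fintype.card ι - ∑ x ∈ A, w x) *
        ∑ z : ι → α with #{j | z j ∈ A} = m, ∏ j, w (z j) := by
  set p := ∑ x ∈ A, w x
  set q := ∑ x ∈ B, w x
  set k : ℝ := (Fintype.card ι : ℝ)
  set N := ∑ z : ι → α with #{j | z j ∈ A} = m, ∏ j, w (z j)
  set Nc := ∑ z : ι → α with #{j | z j ∈ A} = m, (∏ j, w (z j)) * #{j | z j ∈ B \ A}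
  have hp : 1 - p ≠ 0 := sub_ne_zero.2 hA.symm
  have hk : k ≠ 0 := Nat.cast_ne_zero.2 Fintype.card_ne_zero
  have hrest : (1 - p) * Nc = (q - p) * ((k - m) * N) := by
    have h := sum_mul_sum_prod_mul_card_filter_comm w (m := m) (ι := ι)
      (disjoint_sdiff (s := A) (t := B)) (disjoint_sdiff (s := A) (t := univ))
    rw [sum_sdiff_eq_sub hAB, sum_sdiff_eq_sub (subset_univ A), hw] at h
    rw [h]
    congr 1
    rw [mul_sum]
    refine sum_congr rfl fun z hz => ?_
    have hcard := card_filter_mem_add_card_filter_mem_sdiff (subset_univ A) z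
    rw [(mem_filter.1 hz).2, filter_true_of_mem fun j _ => mem_univ _, card_univ] at hcard
    rw [show (#{j | z j ∈ univ \ A} : ℝ) = k - m by rw [eq_sub_iff_add_eq', ← Nat.cast_add, hcard]]
    ring
  have hsplit : ∑ z : ι → α with #{j | z j ∈ A} = m,
      (∏ j, w (z j)) * (#{j | z j ∈ B} / k - q) = (m / k - q) * N + Nc / k := by
    rw [mul_sum, sum_div, ← sum_add_distrib]
    refine sum_congr rfl fun z hz => ?_
    rw [← card_filter_mem_add_card_filter_mem_sdiff hAB z, (mem_filter.1 hz).2]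
    push_cast
    ring
  rw [hsplit]
  field_simp
  linear_combination hrest

end SampleCounts

theorem measureReal_pi_singleton {ι : Type*} [Fintype ι] {α : ι → Type*}
    [∀ i, MeasurableSpace (α i)] (μ : ∀ i, Measure (α i)) [∀ i, SigmaFinite (μ i)]
    (f : ∀ i, α i) : (Measure.pi μ).real {f} = ∏ i, (μ i).real {f i} := by
  simp [measureReal_def, ENNReal.toReal_prod]

theorem trueCDF_eq_sum_measureReal {n : ℕ} (μ : Measure (Fin (n + 1))) [IsFiniteMeasure μ]
    (t : ℕ) : trueCDF μ t = ∑ x ∈ ({j | (j : ℕ) ≤ t} : Finset (Fin (n + 1))), μ.real {x} := by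
  rw [sum_measureReal_singleton, trueCDF, measureReal_def]
  congr
  ext
  simp

theorem stmt12_general {n k : ℕ} (hk : 0 < k) (μ : Measure (Fin (n + 1)))
    [IsProbabilityMeasure μ] (ℓ : ℕ)
    (m : ℕ) (hF : trueCDF μ (ℓ - 1) < 1) :
    ∫ z in {z : Fin k → Fin (n + 1) |
        (Finset.univ.filter (fun i => (z i : ℕ) ≤ ℓ - 1)).card = m},
        (empCDF z ℓ - trueCDF μ ℓ) ∂(Measure.pi fun _ : Fin k => μ) =
      ((1 - trueCDF μ ℓ) / (1 - trueCDF μ (ℓ - 1))) * ((m : ℝ) / k - trueCDF μ (ℓ - 1)) *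
        ((Measure.pi fun _ : Fin k => μ)
          {z : Fin k → Fin (n + 1) |
            (Finset.univ.filter (fun i => (z i : ℕ) ≤ ℓ - 1)).card = m}).toReal := by
  set A : Finset (Fin (n + 1)) := {j | (j : ℕ) ≤ ℓ - 1}
  set B : Finset (Fin (n + 1)) := {j | (j : ℕ) ≤ ℓ}
  have hS : {z : Fin k → Fin (n + 1) | #{i | (z i : ℕ) ≤ ℓ - 1} = m} =
      ↑({z | #{i | z i ∈ A} = m} : Finset (Fin k → Fin (n + 1))) := by
    ext
    simp [A]
  have hemp (z : Fin k → Fin (n + 1)) : empCDF z ℓ = #{i | z i ∈ B} / k := by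
    simp [empCDF, B]
  have hAB : A ⊆ B := fun j hj =>
    mem_filter.2 ⟨mem_univ j, (mem_filter.1 hj).2.trans (Nat.sub_le ℓ 1)⟩
  have hw : ∑ x, μ.real {x} = 1 := by simp
  have : Nonempty (Fin k) := ⟨⟨0, hk⟩⟩
  simp only [trueCDF_eq_sum_measureReal] at hF ⊢
  rw [hS, setIntegral_finset _ Integrable.of_finite.integrableOn,
    ← measureReal_def, ← sum_measureReal_singleton]
  simp only [measureReal_pi_singleton, smul_eq_mul, hemp]
  have key := sum_prod_mul_sub_of_card_filter_eq (ι := Fin k) _ hw hAB hF.ne m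
  rwa [Fintype.card_fin] at key

/-- The martingale property of the normalized empirical-cdf deviations: conditioned on the
event that exactly `m` of the `k` samples are `≤ ℓ−1`, the expected deviation at `ℓ`
equals `((1 − F(ℓ))/(1 − F(ℓ−1))) · (m/k − F(ℓ−1))`. -/
theorem stmt12 {n k : ℕ} (hk : 0 < k) (μ : Measure (Fin (n + 1)))
    [IsProbabilityMeasure μ] (ℓ : ℕ) (hℓ1 : 1 ≤ ℓ) (hℓn : ℓ ≤ n)
    (m : ℕ) (hm : m ≤ k) (hF : trueCDF μ (ℓ - 1) < 1) :
    ∫ z in {z : Fin k → Fin (n + 1) |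
        (Finset.univ.filter (fun i => (z i : ℕ) ≤ ℓ - 1)).card = m},
        (empCDF z ℓ - trueCDF μ ℓ) ∂(Measure.pi fun _ : Fin k => μ) =
      ((1 - trueCDF μ ℓ) / (1 - trueCDF μ (ℓ - 1))) * ((m : ℝ) / k - trueCDF μ (ℓ - 1)) *
        ((Measure.pi fun _ : Fin k => μ)
          {z : Fin k → Fin (n + 1) |
            (Finset.univ.filter (fun i => (z i : ℕ) ≤ ℓ - 1)).card = m}).toReal :=
  stmt12_general hk μ ℓ m hF
end
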